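/- The map F : 𝕋² → ℝ³ given by F(x,y) = (cos(2π(x+y)), cos(2πx), cos(2πy)) semiconjugates the linear toral automorphism induced by A_a = [[a,1],[1,0]] with the trace map T_a = Gᵃ∘H restricted to its image, where G(x₁,x₂,x₃) = (2x₁x₃ − x₂, x₁, x₃) and H(x₁,x₂,x₃) = (x₁,x₃,x₂). That is, F ∘ Â_a = T_a ∘ F, where Â_a is the map on 𝕋² = ℝ²/ℤ² induced by A_a. -/

import Mathlib

/-- `G(x₁,x₂,x₃) = (2x₁x₃ − x₂, x₁, x₃)`. -/
def Gmap : ℝ × ℝ × ℝ → ℝ × ℝ × ℝ := fun p => (2 * p.1 * p.2.2 - p.2.1, p.1, p.2.2)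

/-- `H(x₁,x₂,x₃) = (x₁, x₃, x₂)`. -/
def Hmap : ℝ × ℝ × ℝ → ℝ × ℝ × ℝ := fun p => (p.1, p.2.2, p.2.1)

/-- The trace map `T_a = Gᵃ ∘ H`. -/
def Tmap (a : ℕ) : ℝ × ℝ × ℝ → ℝ × ℝ × ℝ := Gmap^[a] ∘ Hmap

/-- The semiconjugacy `F(x,y) = (cos 2π(x+y), cos 2πx, cos 2πy)`, written on `ℝ²`. -/
noncomputable def Fmap : ℝ × ℝ → ℝ × ℝ × ℝ := fun q =>
  (Real.cos (2 * Real.pi * (q.1 + q.2)), Real.cos (2 * Real.pi * q.1),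
    Real.cos (2 * Real.pi * q.2))

/-! Periodicity is that of `cos`. For the semiconjugacy, the first coordinate of `G` is the
product-to-sum identity `cos (φ + 2θ) = 2 cos (φ + θ) cos θ - cos φ`, so on triples
`(cos (φ + θ), cos φ, cos θ)` the map `Gᵏ` shifts `φ` by `kθ`. `H ∘ F` puts `F (x, y)` in this
form with `φ = 2πy`, `θ = 2πx`, and after `a` shifts the angles are those of `(ax + y, x)`. -/

open Real

lemma cos_two_pi_mul_add_intCast (x : ℝ) (m : ℤ) : cos (2 * π * (x + m)) = cos (2 * π * x) := by
  rw [mul_add, ← cos_add_int_mul_two_pi (2 * π * x) m]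
  ring_nf

lemma Gmap_cos (φ θ : ℝ) :
    Gmap (cos (φ + θ), cos φ, cos θ) = (cos (φ + 2 * θ), cos (φ + θ), cos θ) := by
  have hsum : cos (φ + 2 * θ) + cos φ = 2 * cos (φ + θ) * cos θ := by
    rw [cos_add_cos]
    ring_nf
  simp only [Gmap, Prod.mk.injEq, and_true]
  linarith

lemma Gmap_iterate_cos (φ θ : ℝ) (k : ℕ) :
    Gmap^[k] (cos (φ + θ), cos φ, cos θ) = (cos (φ + (k + 1) * θ), cos (φ + k * θ), cos θ) := by
  induction k with
  | zero => simp
  | succ k ih =>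
    have hk := Gmap_cos (φ + k * θ) θ
    rw [Function.iterate_succ_apply', ih]
    push_cast
    convert hk using 3 <;> ring_nf

theorem stmt6_general (a : ℕ) :
    (∀ (x y : ℝ) (m n : ℤ), Fmap (x + m, y + n) = Fmap (x, y)) ∧
    (∀ x y : ℝ, Fmap ((a : ℝ) * x + y, x) = Tmap a (Fmap (x, y))) := by
  refine ⟨fun x y m n => ?_, fun x y => ?_⟩
  · have hxy : x + m + (y + n) = x + y + ((m + n : ℤ) : ℝ) := by push_cast; ring
    simp only [Fmap, hxy, cos_two_pi_mul_add_intCast]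
  · have hiter := Gmap_iterate_cos (2 * π * y) (2 * π * x) a
    simp only [Tmap, Function.comp_apply, Fmap, Hmap]
    rw [show 2 * π * (x + y) = 2 * π * y + 2 * π * x by ring, hiter]
    ring_nf

/-- `F` is `ℤ²`-periodic (hence induces a map on `𝕋² = ℝ²/ℤ²`) and
semiconjugates the toral automorphism `Â_a(x,y) = (ax+y, x) mod ℤ²` induced by
`A_a = [[a,1],[1,0]]` with the trace map `T_a`: `F ∘ Â_a = T_a ∘ F`. -/
theorem stmt6 (a : ℕ) (ha : 1 ≤ a) :
    (∀ (x y : ℝ) (m n : ℤ), Fmap (x + m, y + n) = Fmap (x, y)) ∧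
    (∀ x y : ℝ, Fmap ((a : ℝ) * x + y, x) = Tmap a (Fmap (x, y))) :=
  stmt6_general a
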